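/- arXiv:1408.4983 — 2 statements merged into one kernel-verified Lean document; each statement's English description precedes it below -/
import Mathlib

section
/- Let N = 3 and η = exp(2πi/3). Then ω³_{0;1} = (η² − 1)/3, and for all n ≥ 1: ω³_{2n−1;1} = ω³_{2n−1;2} = (3^{2n} − 1)·B_{2n}/(4n), and ω³_{2n;1} = −ω³_{2n;2} = −(i√3/(6(2n+1)))·Σ_{j=0}^{2n} 3^{2n−j}·(2^{j+1} − 1)·C(2n+1, 2n−j)·B_{2n−j}, where C(·,·) denotes the binomial coefficient. -/
open scoped BigOperators

noncomputable section

/-- The standard primitive `N`-th root of unity `η = exp(2πi/N)`. -/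
def rootN (N : ℕ) : ℂ := Complex.exp (2 * (Real.pi : ℂ) * Complex.I / (N : ℂ))

/-- The power series `(exp(X) - 1)/X ∈ ℂ[[X]]`. -/
def expm1DivX : PowerSeries ℂ :=
  PowerSeries.mk fun n => (PowerSeries.coeff (R := ℂ) (n + 1)) (PowerSeries.exp ℂ - 1)

/-- `ω^N_{n;α}`. -/
def omegaN (N : ℕ) (α : ℤ) (n : ℕ) : ℂ :=
  if (N : ℤ) ∣ α then
    (n.factorial : ℂ) * (PowerSeries.coeff (R := ℂ) (n + 1)) expm1DivX⁻¹
  else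
    (n.factorial : ℂ) *
      (PowerSeries.coeff (R := ℂ) n) (PowerSeries.C (R := ℂ) (rootN N ^ α) * PowerSeries.exp ℂ - 1)⁻¹

/-! Write `g_ζ = 1/(ζ eˣ - 1)` and `η = e^{2πi/3}`. Partial fractions over the cube roots of unity
give `g_η + g_{η²} = 3/(e^{3X} - 1) - 1/(eˣ - 1)` and
`g_η - g_{η²} = (η² - η) eˣ(eˣ - 1)/(e^{3X} - 1)`, so `X (g_η ± g_{η²})` are expressed through the
Bernoulli series `X/(eˣ - 1)`, its rescaling by `3`, and `e^{2X} - eˣ`. The reflection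
`g_ζ(-X) = -1 - g_{ζ⁻¹}(X)` shows that the coefficients of `g_η` and `g_{η²}` agree in odd degree
and are opposite in positive even degree, so each coefficient of `g_η` is half the corresponding
coefficient of the sum or of the difference. -/

open PowerSeries

lemma PowerSeries.rescale_C {R : Type*} [CommSemiring R] (a b : R) : rescale a (C b) = C b := by
  ext n
  rcases n with _ | n <;> simp [coeff_rescale, coeff_C]

lemma PowerSeries.constantCoeff_rescale {R : Type*} [CommSemiring R] (a : R) (φ : R⟦X⟧) :
    constantCoeff (rescale a φ) = constantCoeff φ := by
  rw [← coeff_zero_eq_constantCoeff_apply, coeff_rescale, pow_zero, one_mul,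
    coeff_zero_eq_constantCoeff_apply]

lemma PowerSeries.rescale_inv {k : Type*} [Field k] (a : k) (φ : k⟦X⟧) :
    rescale a φ⁻¹ = (rescale a φ)⁻¹ := by
  by_cases hφ : constantCoeff φ = 0
  · rw [PowerSeries.inv_eq_zero.mpr hφ, map_zero, eq_comm, PowerSeries.inv_eq_zero,
      constantCoeff_rescale, hφ]
  · rw [PowerSeries.eq_inv_iff_mul_eq_one, ← map_mul, PowerSeries.inv_mul_cancel _ hφ, map_one]
    rwa [constantCoeff_rescale]

lemma sum_range_choose_mul_bernoulli_reflect {K : Type*} [Field K] (a b : K) (m : ℕ) :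
    ∑ k ∈ Finset.range (m + 2),
        ((m + 1).choose k : K) * (a ^ k * bernoulli k) * (b ^ (m + 1 - k) - 1) =
      ∑ j ∈ Finset.range (m + 1),
        a ^ (m - j) * (b ^ (j + 1) - 1) * ((m + 1).choose (m - j) : K) * bernoulli (m - j) := by
  rw [Finset.sum_range_succ, Nat.sub_self, pow_zero, sub_self, mul_zero, add_zero,
    ← Finset.sum_range_reflect]
  refine Finset.sum_congr rfl fun j hj => ?_
  have hjm : j ≤ m := Finset.mem_range_succ_iff.mp hj
  rw [show m + 1 - 1 - j = m - j by omega, show m + 1 - (m - j) = j + 1 by omega]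
  ring

section CharZero

variable {K : Type*} [Field K] [CharZero K]

lemma factorial_mul_coeff_mul_mk_div_factorial (a b : ℕ → K) (n : ℕ) :
    (n.factorial : K) * coeff n (mk (fun k => a k / k.factorial) * mk fun k => b k / k.factorial) =
      ∑ k ∈ Finset.range (n + 1), (n.choose k : K) * a k * b (n - k) := by
  rw [coeff_mul, Finset.Nat.sum_antidiagonal_eq_sum_range_succ_mk, Finset.mul_sum]
  refine Finset.sum_congr rfl fun k hk => ?_
  have hcast : (n.choose k : K) * k.factorial * (n - k).factorial = n.factorial := by
    exact_mod_cast Nat.choose_mul_factorial_mul_factorial (Finset.mem_range_succ_iff.mp hk)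
  simp only [coeff_mk, ← hcast]
  field_simp [Nat.factorial_ne_zero]

lemma rescale_bernoulliPowerSeries (a : K) :
    rescale a (bernoulliPowerSeries K) = mk fun k => a ^ k * bernoulli k / k.factorial := by
  ext k
  simp [bernoulliPowerSeries, coeff_rescale, mul_div_assoc]

lemma rescale_bernoulliPowerSeries_mul_exp_pow_sub_one (k : ℕ) :
    rescale (k : K) (bernoulliPowerSeries K) * (exp K ^ k - 1) = (k : K⟦X⟧) * X := by
  rw [exp_pow_eq_rescale_exp, ← map_one (rescale (k : K)), ← map_sub, ← map_mul,
    bernoulliPowerSeries_mul_exp_sub_one, rescale_X, map_natCast]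

lemma exp_sq_sub_exp :
    (exp K ^ 2 - exp K : K⟦X⟧) = mk fun k => ((2 : K) ^ k - 1) / k.factorial := by
  ext k
  rw [exp_pow_eq_rescale_exp, map_sub, coeff_rescale, coeff_exp, coeff_mk]
  simp [div_eq_mul_inv, sub_mul]

lemma exp_pow_sub_one_ne_zero {k : ℕ} (hk : k ≠ 0) : (exp K ^ k - 1 : K⟦X⟧) ≠ 0 := by
  intro h
  have h1 := congrArg (coeff 1) h
  rw [exp_pow_eq_rescale_exp, map_sub, coeff_rescale, coeff_exp] at h1
  simp [hk] at h1

/-- For `ζ = η^α` this is the exponential generating series `Σ ω^N_{n;α} Xⁿ/n!`. -/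
def omegaSeries (ζ : K) : K⟦X⟧ := (C ζ * exp K - 1)⁻¹

lemma constantCoeff_C_mul_exp_sub_one (ζ : K) : constantCoeff (C ζ * exp K - 1) = ζ - 1 := by
  simp [constantCoeff_exp]

lemma coeff_zero_omegaSeries (ζ : K) : coeff 0 (omegaSeries ζ) = (ζ - 1)⁻¹ := by
  rw [omegaSeries, coeff_zero_eq_constantCoeff_apply, constantCoeff_inv,
    constantCoeff_C_mul_exp_sub_one]

variable {ζ : K}

lemma C_mul_exp_sub_one_mul_omegaSeries (hζ : ζ ≠ 1) : (C ζ * exp K - 1) * omegaSeries ζ = 1 :=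
  PowerSeries.mul_inv_cancel _ <| by
    rw [constantCoeff_C_mul_exp_sub_one]; exact sub_ne_zero_of_ne hζ

lemma evalNegHom_omegaSeries (hζ₀ : ζ ≠ 0) (hζ : ζ ≠ 1) :
    evalNegHom (omegaSeries ζ) = -(1 + omegaSeries ζ⁻¹) := by
  have hinv := C_mul_exp_sub_one_mul_omegaSeries (inv_ne_one.mpr hζ)
  have hexp := exp_mul_exp_neg_eq_one (A := K)
  have hC : C ζ⁻¹ * C ζ = 1 := by rw [← map_mul, inv_mul_cancel₀ hζ₀, map_one]
  rw [omegaSeries, evalNegHom, rescale_inv, eq_comm, PowerSeries.eq_inv_iff_mul_eq_one, map_sub,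
    map_mul, rescale_C, map_one, ← evalNegHom]
  · linear_combination (C ζ * evalNegHom (exp K)) * hinv - omegaSeries ζ⁻¹ * hexp -
      (exp K * evalNegHom (exp K) * omegaSeries ζ⁻¹) * hC
  · rw [constantCoeff_rescale, constantCoeff_C_mul_exp_sub_one]
    exact sub_ne_zero_of_ne hζ

lemma coeff_omegaSeries_inv (hζ₀ : ζ ≠ 0) (hζ : ζ ≠ 1) {m : ℕ} (hm : m ≠ 0) :
    coeff m (omegaSeries ζ⁻¹) = (-1) ^ (m + 1) * coeff m (omegaSeries ζ) := by
  have h := congrArg (coeff m) (evalNegHom_omegaSeries hζ₀ hζ)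
  rw [evalNegHom, coeff_rescale, map_neg, map_add, coeff_one, if_neg hm] at h
  linear_combination h

end CharZero

namespace IsPrimitiveRoot

section Field

variable {K : Type*} [Field K] {ζ : K}

lemma sq_add_self_add_one (hζ : IsPrimitiveRoot ζ 3) : ζ ^ 2 + ζ + 1 = 0 := by
  have h := hζ.geom_sum_eq_zero (by norm_num)
  simp only [Finset.sum_range_succ, Finset.sum_range_zero] at h
  linear_combination h

lemma inv_eq_sq (hζ : IsPrimitiveRoot ζ 3) : ζ⁻¹ = ζ ^ 2 :=
  inv_eq_of_mul_eq_one_right <| by rw [← pow_succ', hζ.pow_eq_one]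

lemma sq_ne_one (hζ : IsPrimitiveRoot ζ 3) : ζ ^ 2 ≠ 1 :=
  (hζ.pow_of_coprime 2 (by norm_num)).ne_one (by norm_num)

end Field

variable {K : Type*} [Field K] [CharZero K] {ζ : K}

lemma inv_sub_one (hζ : IsPrimitiveRoot ζ 3) : (ζ - 1)⁻¹ = (ζ ^ 2 - 1) / 3 :=
  inv_eq_of_mul_eq_one_right <| by linear_combination (ζ - 2) / 3 * hζ.sq_add_self_add_one

lemma C_mul_exp_sub_one_add_C_sq_mul_exp_sub_one (hζ : IsPrimitiveRoot ζ 3) :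
    (C ζ * exp K - 1) + (C (ζ ^ 2) * exp K - 1) = -exp K - 2 := by
  have hadd : C ζ + C (ζ ^ 2) = -1 := by
    rw [← map_add, show ζ + ζ ^ 2 = -1 by linear_combination hζ.sq_add_self_add_one, map_neg,
      map_one]
  linear_combination exp K * hadd

lemma C_mul_exp_sub_one_mul_C_sq_mul_exp_sub_one (hζ : IsPrimitiveRoot ζ 3) :
    (C ζ * exp K - 1) * (C (ζ ^ 2) * exp K - 1) = exp K ^ 2 + exp K + 1 := by
  have hmul : C ζ * C (ζ ^ 2) = 1 := by rw [← map_mul, ← pow_succ', hζ.pow_eq_one, map_one]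
  linear_combination exp K ^ 2 * hmul - hζ.C_mul_exp_sub_one_add_C_sq_mul_exp_sub_one

lemma X_mul_omegaSeries_add_omegaSeries_sq (hζ : IsPrimitiveRoot ζ 3) :
    X * (omegaSeries ζ + omegaSeries (ζ ^ 2)) =
      rescale 3 (bernoulliPowerSeries K) - bernoulliPowerSeries K := by
  have h₁ := C_mul_exp_sub_one_mul_omegaSeries (hζ.ne_one (by norm_num))
  have h₂ := C_mul_exp_sub_one_mul_omegaSeries hζ.sq_ne_one
  have hprod := hζ.C_mul_exp_sub_one_mul_C_sq_mul_exp_sub_one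
  have hsum := hζ.C_mul_exp_sub_one_add_C_sq_mul_exp_sub_one
  have h₃ := rescale_bernoulliPowerSeries_mul_exp_pow_sub_one (K := K) 3
  have hB := bernoulliPowerSeries_mul_exp_sub_one K
  push_cast at h₃
  -- clear denominators with `e^{3X} - 1 = (ζ eˣ - 1)(ζ² eˣ - 1)(eˣ - 1)`
  apply mul_right_cancel₀ (exp_pow_sub_one_ne_zero (K := K) three_ne_zero)
  linear_combination (-(X * (omegaSeries ζ + omegaSeries (ζ ^ 2)) * (exp K - 1))) * hprod +
    (X * (exp K - 1) * (C (ζ ^ 2) * exp K - 1)) * h₁ + (X * (exp K - 1) * (C ζ * exp K - 1)) * h₂ +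
    (X * (exp K - 1)) * hsum - h₃ + (exp K ^ 2 + exp K + 1) * hB

lemma X_mul_omegaSeries_sub_omegaSeries_sq (hζ : IsPrimitiveRoot ζ 3) :
    X * (omegaSeries ζ - omegaSeries (ζ ^ 2)) =
      C ((ζ ^ 2 - ζ) / 3) * (rescale 3 (bernoulliPowerSeries K) * (exp K ^ 2 - exp K)) := by
  have h₁ := C_mul_exp_sub_one_mul_omegaSeries (hζ.ne_one (by norm_num))
  have h₂ := C_mul_exp_sub_one_mul_omegaSeries hζ.sq_ne_one
  have hprod := hζ.C_mul_exp_sub_one_mul_C_sq_mul_exp_sub_one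
  have h₃ := rescale_bernoulliPowerSeries_mul_exp_pow_sub_one (K := K) 3
  have hC : 3 * C ((ζ ^ 2 - ζ) / 3) = C (ζ ^ 2) - C ζ := by
    rw [← map_ofNat C 3, ← map_mul, ← map_sub, mul_div_cancel₀ _ three_ne_zero]
  push_cast at h₃
  apply mul_right_cancel₀ (exp_pow_sub_one_ne_zero (K := K) three_ne_zero)
  linear_combination (-(X * (omegaSeries ζ - omegaSeries (ζ ^ 2)) * (exp K - 1))) * hprod +
    (X * (exp K - 1) * (C (ζ ^ 2) * exp K - 1)) * h₁ - (X * (exp K - 1) * (C ζ * exp K - 1)) * h₂ -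
    C ((ζ ^ 2 - ζ) / 3) * (exp K ^ 2 - exp K) * h₃ - X * (exp K ^ 2 - exp K) * hC

lemma coeff_omegaSeries_add_omegaSeries_sq (hζ : IsPrimitiveRoot ζ 3) (m : ℕ) :
    coeff m (omegaSeries ζ + omegaSeries (ζ ^ 2)) =
      (3 ^ (m + 1) - 1) * bernoulli (m + 1) / (m + 1).factorial := by
  have h := congrArg (coeff (m + 1)) hζ.X_mul_omegaSeries_add_omegaSeries_sq
  rw [coeff_succ_X_mul] at h
  rw [h, map_sub, rescale_bernoulliPowerSeries, bernoulliPowerSeries, coeff_mk, coeff_mk]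
  simp only [map_div₀, eq_ratCast, Rat.cast_natCast]
  ring

lemma factorial_mul_coeff_omegaSeries_sub_omegaSeries_sq (hζ : IsPrimitiveRoot ζ 3) (m : ℕ) :
    ((m + 1).factorial : K) * coeff m (omegaSeries ζ - omegaSeries (ζ ^ 2)) =
      (ζ ^ 2 - ζ) / 3 * ∑ k ∈ Finset.range (m + 2),
        ((m + 1).choose k : K) * (3 ^ k * bernoulli k) * (2 ^ (m + 1 - k) - 1) := by
  have h := congrArg (coeff (m + 1)) hζ.X_mul_omegaSeries_sub_omegaSeries_sq
  rw [coeff_succ_X_mul, coeff_C_mul, rescale_bernoulliPowerSeries, exp_sq_sub_exp] at h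
  rw [h, mul_left_comm, factorial_mul_coeff_mul_mk_div_factorial]

lemma coeff_omegaSeries_sq (hζ : IsPrimitiveRoot ζ 3) {m : ℕ} (hm : m ≠ 0) :
    coeff m (omegaSeries (ζ ^ 2)) = (-1) ^ (m + 1) * coeff m (omegaSeries ζ) := by
  rw [← hζ.inv_eq_sq]
  exact coeff_omegaSeries_inv (hζ.ne_zero (by norm_num)) (hζ.ne_one (by norm_num)) hm

lemma coeff_two_mul_sub_one_omegaSeries_sq (hζ : IsPrimitiveRoot ζ 3) {n : ℕ} (hn : n ≠ 0) :
    coeff (2 * n - 1) (omegaSeries (ζ ^ 2)) = coeff (2 * n - 1) (omegaSeries ζ) := by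
  rw [hζ.coeff_omegaSeries_sq (by omega), Nat.sub_add_cancel (by omega), pow_mul, neg_one_sq,
    one_pow, one_mul]

lemma coeff_two_mul_omegaSeries_sq (hζ : IsPrimitiveRoot ζ 3) {n : ℕ} (hn : n ≠ 0) :
    coeff (2 * n) (omegaSeries (ζ ^ 2)) = -coeff (2 * n) (omegaSeries ζ) := by
  rw [hζ.coeff_omegaSeries_sq (by omega), pow_succ, pow_mul, neg_one_sq, one_pow, one_mul,
    neg_one_mul]

lemma factorial_mul_coeff_omegaSeries_odd (hζ : IsPrimitiveRoot ζ 3) {n : ℕ} (hn : n ≠ 0) :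
    ((2 * n - 1).factorial : K) * coeff (2 * n - 1) (omegaSeries ζ) =
      (3 ^ (2 * n) - 1) * bernoulli (2 * n) / (4 * n) := by
  have hadd := hζ.coeff_omegaSeries_add_omegaSeries_sq (2 * n - 1)
  rw [map_add, hζ.coeff_two_mul_sub_one_omegaSeries_sq hn, Nat.sub_add_cancel (by omega)] at hadd
  have hfac : ((2 * n).factorial : K) = 2 * n * (2 * n - 1).factorial := by
    rw [← Nat.mul_factorial_pred (by omega : 2 * n ≠ 0)]
    push_cast
    ring
  rw [hfac] at hadd
  have : (n : K) ≠ 0 := by exact_mod_cast hn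
  field_simp [Nat.factorial_ne_zero] at hadd ⊢
  linear_combination hadd

lemma factorial_mul_coeff_omegaSeries_even (hζ : IsPrimitiveRoot ζ 3) {n : ℕ} (hn : n ≠ 0) :
    ((2 * n).factorial : K) * coeff (2 * n) (omegaSeries ζ) =
      (ζ ^ 2 - ζ) / (6 * (2 * n + 1)) * ∑ j ∈ Finset.range (2 * n + 1),
        3 ^ (2 * n - j) * (2 ^ (j + 1) - 1) * ((2 * n + 1).choose (2 * n - j) : K) *
          bernoulli (2 * n - j) := by
  have hsub := hζ.factorial_mul_coeff_omegaSeries_sub_omegaSeries_sq (2 * n)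
  rw [map_sub, hζ.coeff_two_mul_omegaSeries_sq hn, sum_range_choose_mul_bernoulli_reflect,
    Nat.factorial_succ] at hsub
  have : (2 * n + 1 : K) ≠ 0 := by exact_mod_cast (2 * n).succ_ne_zero
  field_simp at hsub ⊢
  push_cast at hsub
  linear_combination hsub

end IsPrimitiveRoot

lemma omegaN_eq_factorial_mul_coeff_omegaSeries {N : ℕ} {α : ℤ} (h : ¬(N : ℤ) ∣ α) (n : ℕ) :
    omegaN N α n = n.factorial * coeff n (omegaSeries (rootN N ^ α)) := by
  rw [omegaN, if_neg h, omegaSeries]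

lemma omegaN_three_one (n : ℕ) :
    omegaN 3 1 n = n.factorial * coeff n (omegaSeries (rootN 3)) := by
  rw [omegaN_eq_factorial_mul_coeff_omegaSeries (by decide), zpow_one]

lemma omegaN_three_two (n : ℕ) :
    omegaN 3 2 n = n.factorial * coeff n (omegaSeries (rootN 3 ^ 2)) := by
  rw [omegaN_eq_factorial_mul_coeff_omegaSeries (by decide), zpow_ofNat]

lemma isPrimitiveRoot_rootN {N : ℕ} (hN : N ≠ 0) : IsPrimitiveRoot (rootN N) N :=
  Complex.isPrimitiveRoot_exp N hN

lemma rootN_three : rootN 3 = -1 / 2 + Real.sqrt 3 / 2 * Complex.I := by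
  have hangle : 2 * Real.pi / 3 = Real.pi - Real.pi / 3 := by ring
  have hcos : Real.cos (2 * Real.pi / 3) = -1 / 2 := by
    rw [hangle, Real.cos_pi_sub, Real.cos_pi_div_three]
    norm_num
  have hsin : Real.sin (2 * Real.pi / 3) = Real.sqrt 3 / 2 := by
    rw [hangle, Real.sin_pi_sub, Real.sin_pi_div_three]
  rw [rootN, show 2 * (Real.pi : ℂ) * Complex.I / (3 : ℕ) = (2 * Real.pi / 3 : ℝ) * Complex.I by
    push_cast; ring, Complex.exp_mul_I, ← Complex.ofReal_cos, ← Complex.ofReal_sin, hcos, hsin]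
  push_cast
  ring

lemma rootN_three_sq_sub_self : rootN 3 ^ 2 - rootN 3 = -(Complex.I * Real.sqrt 3) := by
  have hsqrt : (Real.sqrt 3 : ℂ) ^ 2 = 3 := by
    exact_mod_cast Real.sq_sqrt (by norm_num : (0 : ℝ) ≤ 3)
  rw [rootN_three]
  linear_combination (-1 / 4 : ℂ) * hsqrt + (Real.sqrt 3 : ℂ) ^ 2 / 4 * Complex.I_sq

theorem stmt_4 :
    omegaN 3 1 0 = (rootN 3 ^ 2 - 1) / 3 ∧
    ∀ n : ℕ, 1 ≤ n →
      omegaN 3 1 (2 * n - 1) = ((3 : ℂ) ^ (2 * n) - 1) * (bernoulli (2 * n) : ℂ) / (4 * n) ∧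
      omegaN 3 2 (2 * n - 1) = ((3 : ℂ) ^ (2 * n) - 1) * (bernoulli (2 * n) : ℂ) / (4 * n) ∧
      omegaN 3 1 (2 * n) = -(Complex.I * (Real.sqrt 3 : ℂ) / (6 * (2 * n + 1))) *
          ∑ j ∈ Finset.range (2 * n + 1),
            (3 : ℂ) ^ (2 * n - j) * ((2 : ℂ) ^ (j + 1) - 1) *
              (Nat.choose (2 * n + 1) (2 * n - j) : ℂ) * (bernoulli (2 * n - j) : ℂ) ∧
      omegaN 3 2 (2 * n) = -omegaN 3 1 (2 * n) := by
  have hη := isPrimitiveRoot_rootN (N := 3) (by norm_num)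
  refine ⟨?_, fun n hn => ?_⟩
  · rw [omegaN_three_one, Nat.factorial_zero, Nat.cast_one, one_mul, coeff_zero_omegaSeries,
      hη.inv_sub_one]
  have hn : n ≠ 0 := by omega
  refine ⟨?_, ?_, ?_, ?_⟩
  · rw [omegaN_three_one, hη.factorial_mul_coeff_omegaSeries_odd hn]
  · rw [omegaN_three_two, hη.coeff_two_mul_sub_one_omegaSeries_sq hn,
      hη.factorial_mul_coeff_omegaSeries_odd hn]
  · rw [omegaN_three_one, hη.factorial_mul_coeff_omegaSeries_even hn, rootN_three_sq_sub_self,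
      neg_div]
  · rw [omegaN_three_one, omegaN_three_two, hη.coeff_two_mul_omegaSeries_sq hn, mul_neg]
end
end

section
/- Let N = 4 and η = i. Then for all n ≥ 0: ω⁴_{n;2} = ω²_{n;1} = (2^{n+1} − 1)·B_{n+1}/(n+1) and ω⁴_{n;3} is the complex conjugate of ω⁴_{n;1}; moreover ω⁴_{0;1} = (−1 − i)/2, ω⁴_{n;1} = 2^n·(2^{n+1} − 1)·B_{n+1}/(n+1) for every odd n ≥ 1, and ω⁴_{n;1} = −(i/2)·E_n for every even n ≥ 2, where E_n := n! times the coefficient of X^n in the multiplicative inverse of the power series (exp(X) + exp(−X))/2 ∈ ℂ[[X]] (the Euler numbers, generating function sech). -/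
open scoped BigOperators

noncomputable section

/-- The Euler numbers `E_n`: `n!` times the coefficient of `X^n` in the multiplicative
inverse of `(exp(X) + exp(-X))/2` (the generating function of `sech`). -/
def eulerE (n : ℕ) : ℂ :=
  (n.factorial : ℂ) * (PowerSeries.coeff (R := ℂ) n)
    (PowerSeries.C (R := ℂ) (1 / 2) *
      (PowerSeries.exp ℂ + PowerSeries.rescale (-1 : ℂ) (PowerSeries.exp ℂ)))⁻¹

/-! Write `e = exp X`. Since `(i e - 1)(-i e - 1) = e² + 1`,
`1/(i e - 1) = -1/(e² + 1) - (i/2)·2e/(e² + 1)`, and `2e/(e² + 1) = 1/cosh X`.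
The first term is `-1/(e^X + 1)` at `2X`, and `-1/(e^X + 1) = (B(2X) - B(X))/X` with
`B(X) = X/(e^X - 1)`, whence the coefficients `(2^{n+1} - 1) B_{n+1}/(n+1)!`; the case
`η = -1` is this series itself. As `cosh` is even, `1/cosh X` has no odd coefficients, while
`B_{n+1} = 0` for even `n ≥ 2`. Finally `i³ = conj i`, and conjugation fixes `exp`. -/

namespace PowerSeries

section Field

variable {K L : Type*} [Field K] [Field L]

theorem map_inv (σ : K →+* L) (φ : K⟦X⟧) : map σ φ⁻¹ = (map σ φ)⁻¹ := by
  by_cases h : constantCoeff φ = 0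
  · rw [inv_eq_zero.mpr h, map_zero, eq_comm, inv_eq_zero, ← coeff_zero_eq_constantCoeff_apply,
      coeff_map, coeff_zero_eq_constantCoeff_apply, h, map_zero]
  · have hσ : constantCoeff (map σ φ) ≠ 0 := by
      rwa [← coeff_zero_eq_constantCoeff_apply, coeff_map, coeff_zero_eq_constantCoeff_apply,
        map_ne_zero]
    rw [eq_inv_iff_mul_eq_one hσ, ← map_mul, PowerSeries.inv_mul_cancel _ h, map_one]

theorem constantCoeff_rescale_s5 {R : Type*} [CommSemiring R] (a : R) (φ : R⟦X⟧) :
    constantCoeff (rescale a φ) = constantCoeff φ := by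
  rw [← coeff_zero_eq_constantCoeff_apply, coeff_rescale, pow_zero, one_mul,
    coeff_zero_eq_constantCoeff_apply]

theorem rescale_inv_s5 (a : K) (φ : K⟦X⟧) : rescale a φ⁻¹ = (rescale a φ)⁻¹ := by
  have hc := constantCoeff_rescale_s5 a φ
  by_cases h : constantCoeff φ = 0
  · rw [inv_eq_zero.mpr h, map_zero, eq_comm, inv_eq_zero, hc, h]
  · rw [eq_inv_iff_mul_eq_one (hc ▸ h), ← map_mul, PowerSeries.inv_mul_cancel _ h, map_one]

theorem map_inv_C_mul_exp_sub_one [CharZero K] [CharZero L] (σ : K →+* L) (c : K) :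
    map σ (C c * exp K - 1)⁻¹ = (C (σ c) * exp L - 1)⁻¹ := by
  rw [map_inv, map_sub, map_mul, map_C, map_exp, map_one]

theorem coeff_eq_zero_of_rescale_neg_one_eq [CharZero K] {φ : K⟦X⟧}
    (hφ : rescale (-1) φ = φ) {n : ℕ} (hn : Odd n) : coeff n φ = 0 := by
  have h := congrArg (coeff n) hφ
  rw [coeff_rescale, hn.neg_one_pow, neg_one_mul, neg_eq_iff_add_eq_zero, ← two_mul] at h
  exact (mul_eq_zero.mp h).resolve_left two_ne_zero

end Field

section Exp

variable (K : Type*) [Field K] [CharZero K]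

def bernoulliTwoPowSeries : K⟦X⟧ :=
  mk fun n => (2 ^ (n + 1) - 1) * (bernoulli (n + 1) : K) / (n + 1).factorial

def cosh : K⟦X⟧ := C (1 / 2) * (exp K + rescale (-1) (exp K))

variable {K}

theorem rescale_two_exp : rescale 2 (exp K) = exp K ^ 2 := by
  rw [exp_pow_eq_rescale_exp, Nat.cast_ofNat]

theorem factorial_mul_coeff_bernoulliTwoPowSeries (n : ℕ) :
    n.factorial * coeff n (bernoulliTwoPowSeries K) =
      (2 ^ (n + 1) - 1) * (bernoulli (n + 1) : K) / (n + 1) := by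
  have := Nat.cast_ne_zero (R := K).mpr n.factorial_ne_zero
  rw [bernoulliTwoPowSeries, coeff_mk, Nat.factorial_succ, Nat.cast_mul, Nat.cast_succ]
  field_simp

theorem X_mul_bernoulliTwoPowSeries :
    X * bernoulliTwoPowSeries K = rescale 2 (bernoulliPowerSeries K) - bernoulliPowerSeries K := by
  ext (_ | n)
  · simp [bernoulliPowerSeries, constantCoeff_rescale_s5]
  · rw [coeff_succ_X_mul]
    simp only [bernoulliTwoPowSeries, bernoulliPowerSeries, coeff_mk, map_sub, coeff_rescale,
      eq_ratCast]
    push_cast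
    ring

theorem inv_C_neg_one_mul_exp_sub_one : (C (-1) * exp K - 1)⁻¹ = bernoulliTwoPowSeries K := by
  have hB := bernoulliPowerSeries_mul_exp_sub_one K
  have hB₂ := congrArg (rescale (2 : K)) hB
  rw [map_mul, map_sub, map_one, rescale_X, rescale_two_exp, map_ofNat] at hB₂
  have hXe : X * (exp K - 1) ≠ 0 := mul_ne_zero X_ne_zero fun (h : exp K - 1 = 0) => by
    simpa [coeff_exp] using congrArg (coeff 1) h
  rw [inv_eq_iff_mul_eq_one (by simp; norm_num), map_neg, map_one]
  -- after clearing `X (e^X - 1)`, this is `B(X) (e^X - 1) = X` at `X` and at `2X`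
  refine mul_left_cancel₀ hXe ?_
  linear_combination (-exp K - 1) * (exp K - 1) * X_mul_bernoulliTwoPowSeries (K := K) - hB₂ +
    (exp K + 1) * hB

theorem constantCoeff_cosh : constantCoeff (cosh K) = 1 := by
  simp only [cosh, map_mul, map_add, constantCoeff_C, constantCoeff_rescale_s5, constantCoeff_exp]
  norm_num

theorem rescale_neg_one_cosh : rescale (-1) (cosh K) = cosh K := by
  rw [cosh, map_mul, map_add, rescale_rescale, neg_one_mul, neg_neg, rescale_one, add_comm]
  congr 1
  ext (_ | n) <;> simp [coeff_rescale, coeff_C]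

theorem coeff_inv_cosh_of_odd {n : ℕ} (hn : Odd n) : coeff n (cosh K)⁻¹ = 0 :=
  coeff_eq_zero_of_rescale_neg_one_eq (by rw [rescale_inv_s5, rescale_neg_one_cosh]) hn

theorem exp_mul_cosh : exp K * cosh K = C (1 / 2) * (exp K ^ 2 + 1) := by
  have h := exp_mul_exp_neg_eq_one (A := K)
  rw [evalNegHom] at h
  rw [cosh]
  linear_combination C (1 / 2 : K) * h

theorem inv_C_mul_exp_sub_one_of_mul_self_eq_neg_one {i : K} (hi : i * i = -1) :
    (C i * exp K - 1)⁻¹ = rescale 2 (bernoulliTwoPowSeries K) - C (i / 2) * (cosh K)⁻¹ := by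
  have hi_ne_one : i - 1 ≠ 0 := fun h => by
    rw [sub_eq_zero.mp h, one_mul, eq_neg_iff_add_eq_zero, one_add_one_eq_two] at hi
    exact two_ne_zero hi
  have hG : (exp K ^ 2 + 1) * rescale 2 (bernoulliTwoPowSeries K) = -1 := by
    have h := PowerSeries.inv_mul_cancel (C (-1) * exp K - 1) (by simp; norm_num)
    rw [inv_C_neg_one_mul_exp_sub_one, map_neg, map_one, neg_one_mul] at h
    have h₂ := congrArg (rescale (2 : K)) h
    rw [map_mul, map_sub, map_neg, map_one, rescale_two_exp] at h₂
    linear_combination -h₂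
  have hcosh : C (1 / 2) * (exp K ^ 2 + 1) * (cosh K)⁻¹ = exp K := by
    have h := PowerSeries.mul_inv_cancel (cosh K) (by rw [constantCoeff_cosh]; exact one_ne_zero)
    linear_combination exp K * h - (cosh K)⁻¹ * exp_mul_cosh (K := K)
  have hI : C i * C i = -1 := by rw [← map_mul, hi, map_neg, map_one]
  have hne : (exp K ^ 2 + 1 : K⟦X⟧) ≠ 0 := fun h => by
    simpa using congrArg constantCoeff h
  rw [inv_eq_iff_mul_eq_one (by simpa using hi_ne_one), div_eq_mul_one_div, map_mul]
  refine mul_left_cancel₀ hne ?_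
  linear_combination (C i * exp K - 1) * hG - C i * (C i * exp K - 1) * hcosh - exp K ^ 2 * hI

end Exp

end PowerSeries

open PowerSeries

theorem rootN_four : rootN 4 = Complex.I := by
  rw [rootN, show 2 * (Real.pi : ℂ) * Complex.I / (4 : ℕ) = Real.pi / 2 * Complex.I by
    push_cast; ring, Complex.exp_mul_I, ← Complex.ofReal_ofNat, ← Complex.ofReal_div,
    ← Complex.ofReal_cos, ← Complex.ofReal_sin, Real.cos_pi_div_two, Real.sin_pi_div_two]
  simp

theorem rootN_two : rootN 2 = -1 := by
  rw [rootN, show 2 * (Real.pi : ℂ) * Complex.I / (2 : ℕ) = Real.pi * Complex.I by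
    push_cast; ring, Complex.exp_pi_mul_I]

theorem omegaN_of_not_dvd {N : ℕ} {α : ℤ} (h : ¬(N : ℤ) ∣ α) (n : ℕ) :
    omegaN N α n = n.factorial * coeff n (C (rootN N ^ α) * exp ℂ - 1)⁻¹ :=
  if_neg h

theorem eulerE_eq (n : ℕ) : eulerE n = n.factorial * coeff n (cosh ℂ)⁻¹ := rfl

theorem eulerE_zero : eulerE 0 = 1 := by
  rw [eulerE_eq, coeff_zero_eq_constantCoeff_apply, constantCoeff_inv, constantCoeff_cosh]
  simp

theorem eulerE_of_odd {n : ℕ} (hn : Odd n) : eulerE n = 0 := by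
  rw [eulerE_eq, coeff_inv_cosh_of_odd hn, mul_zero]

theorem omegaN_four_two (n : ℕ) :
    omegaN 4 2 n = (2 ^ (n + 1) - 1) * (bernoulli (n + 1) : ℂ) / (n + 1) := by
  rw [omegaN_of_not_dvd (by decide), rootN_four, zpow_two, Complex.I_mul_I,
    inv_C_neg_one_mul_exp_sub_one, factorial_mul_coeff_bernoulliTwoPowSeries]

theorem omegaN_two_one (n : ℕ) :
    omegaN 2 1 n = (2 ^ (n + 1) - 1) * (bernoulli (n + 1) : ℂ) / (n + 1) := by
  rw [omegaN_of_not_dvd (by decide), rootN_two, zpow_one, inv_C_neg_one_mul_exp_sub_one,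
    factorial_mul_coeff_bernoulliTwoPowSeries]

theorem omegaN_four_three (n : ℕ) : omegaN 4 3 n = starRingEnd ℂ (omegaN 4 1 n) := by
  have h : Complex.I ^ (3 : ℤ) = starRingEnd ℂ Complex.I := by
    rw [Complex.conj_I, show (3 : ℤ) = (3 : ℕ) from rfl, zpow_natCast, pow_succ, sq,
      Complex.I_mul_I, neg_one_mul]
  rw [omegaN_of_not_dvd (by decide), omegaN_of_not_dvd (by decide), rootN_four, h, zpow_one,
    ← map_inv_C_mul_exp_sub_one, coeff_map, map_mul, map_natCast]

theorem omegaN_four_one (n : ℕ) :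
    omegaN 4 1 n = 2 ^ n * ((2 ^ (n + 1) - 1) * (bernoulli (n + 1) : ℂ) / (n + 1)) -
      Complex.I / 2 * eulerE n := by
  rw [omegaN_of_not_dvd (by decide), rootN_four, zpow_one,
    inv_C_mul_exp_sub_one_of_mul_self_eq_neg_one Complex.I_mul_I, map_sub, coeff_rescale,
    coeff_C_mul, eulerE_eq, ← factorial_mul_coeff_bernoulliTwoPowSeries]
  ring

theorem stmt_5 :
    (∀ n : ℕ, omegaN 4 2 n = omegaN 2 1 n ∧
        omegaN 4 2 n = ((2 : ℂ) ^ (n + 1) - 1) * (bernoulli (n + 1) : ℂ) / (n + 1) ∧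
        omegaN 4 3 n = (starRingEnd ℂ) (omegaN 4 1 n)) ∧
    omegaN 4 1 0 = (-1 - Complex.I) / 2 ∧
    (∀ n : ℕ, 1 ≤ n → Odd n →
        omegaN 4 1 n = (2 : ℂ) ^ n * ((2 : ℂ) ^ (n + 1) - 1) * (bernoulli (n + 1) : ℂ) / (n + 1)) ∧
    (∀ n : ℕ, 2 ≤ n → Even n → omegaN 4 1 n = -(Complex.I / 2) * eulerE n) := by
  refine ⟨fun n => ⟨?_, omegaN_four_two n, omegaN_four_three n⟩, ?_, fun n _ hn => ?_,
    fun n hn₂ hn => ?_⟩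
  · rw [omegaN_four_two, omegaN_two_one]
  · rw [omegaN_four_one, eulerE_zero, bernoulli_one]
    push_cast
    ring
  · rw [omegaN_four_one, eulerE_of_odd hn]
    ring
  · rw [omegaN_four_one, bernoulli_eq_zero_of_odd hn.add_one (by omega)]
    push_cast
    ring

end
end
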